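/- arXiv:2604.08099 — 7 statements merged into one kernel-verified Lean document; each statement's English description precedes it below -/
import Mathlib

section
/- Let p ≥ 1, let b₁,…,b_p ∈ ℝ³ be such that S := Σᵢ bᵢbᵢᵀ is invertible, let P be a symmetric real 3×3 matrix, let R̃ be a real 3×3 matrix with R̃ᵀR̃ = R̃R̃ᵀ = I, let k > 0, and set P̂ := R̃·P·R̃ᵀ. Define Δ := k·Σᵢ (S⁻¹bᵢ) × (P̂·(I − R̃)·bᵢ) ∈ ℝ³. Then [Δ]× = k·(P·R̃ᵀ − R̃·P). -/
open Matrix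

/-- The skew-symmetric matrix `[x]ₓ` associated with the cross product: `[x]ₓ ⬝ y = x × y`. -/
def skew (x : Fin 3 → ℝ) : Matrix (Fin 3) (Fin 3) ℝ :=
  !![0, -x 2, x 1; x 2, 0, -x 0; -x 1, x 0, 0]

/-!
Since `[u × v]ₓ = v uᵀ - u vᵀ`, the map `b ↦ [(M b) × (A b)]ₓ` is `A (b bᵀ) Mᵀ - M (b bᵀ) Aᵀ`, so
summing over the `bᵢ` turns `[Δ]ₓ` into `k (A S S⁻ᵀ - S⁻¹ S Aᵀ) = k (A - Aᵀ)` with `A = P̂ (I - R̃)`.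
For `P̂ = R̃ P R̃ᵀ` with `R̃ᵀ R̃ = I` and `P` symmetric, `A - Aᵀ = P R̃ᵀ - R̃ P`.
-/

lemma skew_add (x y : Fin 3 → ℝ) : skew (x + y) = skew x + skew y := by
  ext i j
  fin_cases i <;> fin_cases j <;> simp [skew] <;> ring

lemma skew_smul (c : ℝ) (x : Fin 3 → ℝ) : skew (c • x) = c • skew x := by
  ext i j
  fin_cases i <;> fin_cases j <;> simp [skew]

lemma skew_sum {ι : Type*} (s : Finset ι) (f : ι → Fin 3 → ℝ) :
    skew (∑ i ∈ s, f i) = ∑ i ∈ s, skew (f i) :=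
  map_sum (AddMonoidHom.mk' skew skew_add) f s

lemma skew_crossProduct (u v : Fin 3 → ℝ) :
    skew (u ⨯₃ v) = vecMulVec v u - vecMulVec u v := by
  ext i j
  fin_cases i <;> fin_cases j <;> simp [skew, crossProduct, vecMulVec] <;> ring

lemma Matrix.mul_vecMulVec_mul_transpose {l m n o R : Type*} [Fintype m] [Fintype n]
    [CommSemiring R] (M : Matrix l m R) (N : Matrix o n R) (u : m → R) (v : n → R) :
    M * vecMulVec u v * Nᵀ = vecMulVec (M *ᵥ u) (N *ᵥ v) := by
  rw [mul_vecMulVec, vecMulVec_mul, vecMul_transpose]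

lemma sum_skew_crossProduct_mulVec {ι : Type*} [Fintype ι] (b : ι → Fin 3 → ℝ)
    (M A : Matrix (Fin 3) (Fin 3) ℝ) :
    ∑ i, skew ((M *ᵥ b i) ⨯₃ (A *ᵥ b i)) =
      A * (∑ i, vecMulVec (b i) (b i)) * Mᵀ - M * (∑ i, vecMulVec (b i) (b i)) * Aᵀ := by
  simp only [skew_crossProduct, ← mul_vecMulVec_mul_transpose, Finset.sum_sub_distrib,
    Matrix.mul_sum, Matrix.sum_mul]

lemma Matrix.conj_mul_one_sub_sub_transpose {n R : Type*} [Fintype n] [DecidableEq n]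
    [CommRing R] {P U : Matrix n n R} (hP : Pᵀ = P) (hU : Uᵀ * U = 1) :
    U * P * Uᵀ * (1 - U) - (U * P * Uᵀ * (1 - U))ᵀ = P * Uᵀ - U * P := by
  have hUPU : U * P * Uᵀ * U = U * P := by rw [Matrix.mul_assoc, hU, Matrix.mul_one]
  simp only [transpose_mul, transpose_sub, transpose_transpose, hP,
    Matrix.mul_sub, Matrix.mul_one, hUPU, ← Matrix.mul_assoc]
  abel

theorem stmt1_general (p : ℕ) (b : Fin p → Fin 3 → ℝ)
    (S : Matrix (Fin 3) (Fin 3) ℝ) (hS : S = ∑ i, vecMulVec (b i) (b i))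
    (hSinv : IsUnit S)
    (P Rt : Matrix (Fin 3) (Fin 3) ℝ) (hP : Pᵀ = P)
    (hRt1 : Rtᵀ * Rt = 1)
    (k : ℝ)
    (Phat : Matrix (Fin 3) (Fin 3) ℝ) (hPhat : Phat = Rt * P * Rtᵀ)
    (Δ : Fin 3 → ℝ)
    (hΔ : Δ = k • ∑ i, (S⁻¹ *ᵥ b i) ⨯₃ ((Phat * (1 - Rt)) *ᵥ b i)) :
    skew Δ = k • (P * Rtᵀ - Rt * P) := by
  have hS_symm : Sᵀ = S := by simp [hS, transpose_sum]
  have hdet : IsUnit S.det := (isUnit_iff_isUnit_det S).mp hSinv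
  rw [hΔ, skew_smul, skew_sum, sum_skew_crossProduct_mulVec, ← hS, transpose_nonsing_inv,
    hS_symm, Matrix.mul_assoc, mul_nonsing_inv S hdet, nonsing_inv_mul S hdet, Matrix.mul_one,
    Matrix.one_mul, hPhat, conj_mul_one_sub_sub_transpose hP hRt1]

theorem stmt1 (p : ℕ) (hp : 1 ≤ p) (b : Fin p → Fin 3 → ℝ)
    (S : Matrix (Fin 3) (Fin 3) ℝ) (hS : S = ∑ i, vecMulVec (b i) (b i))
    (hSinv : IsUnit S)
    (P Rt : Matrix (Fin 3) (Fin 3) ℝ) (hP : Pᵀ = P)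
    (hRt1 : Rtᵀ * Rt = 1) (hRt2 : Rt * Rtᵀ = 1)
    (k : ℝ) (hk : 0 < k)
    (Phat : Matrix (Fin 3) (Fin 3) ℝ) (hPhat : Phat = Rt * P * Rtᵀ)
    (Δ : Fin 3 → ℝ)
    (hΔ : Δ = k • ∑ i, (S⁻¹ *ᵥ b i) ⨯₃ ((Phat * (1 - Rt)) *ᵥ b i)) :
    skew Δ = k • (P * Rtᵀ - Rt * P) :=
  stmt1_general p b S hS hSinv P Rt hP hRt1 k Phat hPhat Δ hΔ
end

section
/- Let k > 0, let P : ℝ → Matrix (Fin 3) (Fin 3) ℝ be continuous with P(t) symmetric positive semidefinite for every t, and let R̃ : ℝ → Matrix (Fin 3) (Fin 3) ℝ be differentiable with R̃(t)ᵀ·R̃(t) = I for every t and satisfying the differential equation R̃'(t) = k·(P(t)·R̃(t)ᵀ − R̃(t)·P(t))·R̃(t) for all t. Then the function t ↦ trace(I − R̃(t)) is nonincreasing on ℝ (equivalently, t ↦ trace(R̃(t)) is nondecreasing). -/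
/-!
Along the flow, `d/dt trace R = k · trace ((P Rᵀ - R P) R) = k · (trace P - trace (P R²))`, using
`Rᵀ R = 1`. Since `R²` is again orthogonal, it suffices that `trace (P Q) ≤ trace P` for every
orthogonal `Q` and positive semidefinite `P`; this holds because
`(1 - Q) P (1 - Q)ᵀ` is positive semidefinite with trace `2 (trace P - trace (P Q))`.
-/

open Matrix

attribute [local instance] Matrix.frobeniusNormedAddCommGroup Matrix.frobeniusNormedSpace

variable {n : Type*} [Fintype n]

theorem HasDerivAt.matrix_trace {f : ℝ → Matrix n n ℝ} {f' : Matrix n n ℝ} {t : ℝ}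
    (hf : HasDerivAt f f' t) : HasDerivAt (fun s => (f s).trace) f'.trace t :=
  (traceLinearMap n ℝ ℝ).toContinuousLinearMap.hasFDerivAt.comp_hasDerivAt t hf

variable [DecidableEq n]

theorem Matrix.PosSemidef.trace_mul_le_trace_of_transpose_mul_self_eq_one
    {P Q : Matrix n n ℝ} (hP : P.PosSemidef) (hQ : Qᵀ * Q = 1) : (P * Q).trace ≤ P.trace := by
  have hPt : Pᵀ = P := hP.isHermitian.eq
  have hsandwich : ((1 - Q) * P * (1 - Q)ᵀ).PosSemidef := by
    simpa only [conjTranspose_eq_transpose_of_trivial] using hP.mul_mul_conjTranspose_same (1 - Q)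
  have htrace_PQt : (P * Qᵀ).trace = (P * Q).trace := by
    rw [← trace_transpose, transpose_mul, transpose_transpose, hPt, trace_mul_comm]
  have htrace_QPQt : (Q * P * Qᵀ).trace = P.trace := by
    rw [trace_mul_cycle, hQ, one_mul]
  have hexpand : (1 - Q) * P * (1 - Q)ᵀ = P - P * Qᵀ - Q * P + Q * P * Qᵀ := by
    rw [transpose_sub, transpose_one]
    noncomm_ring
  have := hsandwich.trace_nonneg
  rw [hexpand, trace_add, trace_sub, trace_sub, htrace_PQt, htrace_QPQt, trace_mul_comm Q P] at this
  linarith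

theorem Matrix.PosSemidef.trace_commutator_mul_nonneg {P R : Matrix n n ℝ} (hP : P.PosSemidef)
    (hR : Rᵀ * R = 1) : 0 ≤ ((P * Rᵀ - R * P) * R).trace := by
  have hR2 : (R * R)ᵀ * (R * R) = 1 := by
    rw [transpose_mul, Matrix.mul_assoc, ← Matrix.mul_assoc Rᵀ R R, hR, Matrix.one_mul, hR]
  have hexpand : ((P * Rᵀ - R * P) * R).trace = P.trace - (P * (R * R)).trace := by
    rw [Matrix.sub_mul, trace_sub, Matrix.mul_assoc, hR, Matrix.mul_one, Matrix.mul_assoc,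
      trace_mul_comm R, Matrix.mul_assoc]
  rw [hexpand, sub_nonneg]
  exact hP.trace_mul_le_trace_of_transpose_mul_self_eq_one hR2

theorem stmt4_general (k : ℝ) (hk : 0 < k) (P Rt : ℝ → Matrix (Fin 3) (Fin 3) ℝ)
    (hPsd : ∀ t : ℝ, (P t).PosSemidef)
    (hRtO : ∀ t : ℝ, (Rt t)ᵀ * Rt t = 1)
    (hRt : ∀ t : ℝ, HasDerivAt Rt (k • ((P t * (Rt t)ᵀ - Rt t * P t) * Rt t)) t) :
    Antitone fun t => Matrix.trace ((1 : Matrix (Fin 3) (Fin 3) ℝ) - Rt t) := by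
  have htrace_mono : Monotone fun t => (Rt t).trace := by
    refine monotone_of_hasDerivAt_nonneg (fun t => (hRt t).matrix_trace) fun t => ?_
    rw [trace_smul]
    exact smul_nonneg hk.le ((hPsd t).trace_commutator_mul_nonneg (hRtO t))
  intro s t hst
  simp only [trace_sub]
  linarith [htrace_mono hst]

theorem stmt4 (k : ℝ) (hk : 0 < k) (P Rt : ℝ → Matrix (Fin 3) (Fin 3) ℝ)
    (hPc : Continuous P) (hPsd : ∀ t : ℝ, (P t).PosSemidef)
    (hRtO : ∀ t : ℝ, (Rt t)ᵀ * Rt t = 1)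
    (hRt : ∀ t : ℝ, HasDerivAt Rt (k • ((P t * (Rt t)ᵀ - Rt t * P t) * Rt t)) t) :
    Antitone fun t => Matrix.trace ((1 : Matrix (Fin 3) (Fin 3) ℝ) - Rt t) :=
  stmt4_general k hk P Rt hPsd hRtO hRt
end

section
/- Let v, w ∈ ℝ³ be unit vectors for the Euclidean norm. Then the operator norm (with respect to the Euclidean norm on ℝ³) of the linear map x ↦ (vᵀx)·v − (wᵀx)·w, i.e. of the matrix vvᵀ − wwᵀ, equals √(1 − (vᵀw)²), the sine of the angle between v and w. -/
open Matrix

/-!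
Write `c = v ⬝ᵥ w` and `A = v vᵀ - w wᵀ`. Multiplying out rank-one matrices gives
`A ^ 3 = (1 - c ^ 2) • A`, and `A` is symmetric. In the C⋆-algebra of matrices with the
`ℓ²` operator norm, the C⋆-identity for the self-adjoint elements `A` and `A ^ 2` then forces
`‖A‖ ^ 2 = |1 - c ^ 2|` whenever `A ≠ 0`. Finally `A *ᵥ v = v - c • w` has squared length
`1 - c ^ 2`, which is therefore nonnegative and vanishes when `A = 0`.
-/

/-- Euclidean norm of a vector in `ℝ³`. -/
noncomputable def vecEnorm (v : Fin 3 → ℝ) : ℝ := Real.sqrt (v ⬝ᵥ v)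

/-- Operator norm of a `3 × 3` real matrix with respect to the Euclidean norm on `ℝ³`. -/
noncomputable def opNorm (A : Matrix (Fin 3) (Fin 3) ℝ) : ℝ :=
  ‖(Matrix.toEuclideanLin A).toContinuousLinearMap‖

theorem IsSelfAdjoint.norm_sq_eq_of_pow_three_eq_smul {𝕜 E : Type*} [NormedField 𝕜]
    [NormedRing E] [StarRing E] [CStarRing E] [NormedAlgebra 𝕜 E] {a : E}
    (ha : IsSelfAdjoint a) {r : 𝕜} (h : a ^ 3 = r • a) (ha0 : a ≠ 0) :
    ‖a‖ ^ 2 = ‖r‖ := by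
  have h4 : a ^ 2 * a ^ 2 = r • a ^ 2 := by
    rw [← pow_add, pow_succ', h, mul_smul_comm, ← sq]
  have hsq : ‖a ^ 2‖ = ‖a‖ ^ 2 := by rw [sq a, ha.norm_mul_self]
  have hne : ‖a ^ 2‖ ≠ 0 := by rw [hsq]; positivity
  have hcstar : ‖r‖ * ‖a ^ 2‖ = ‖a ^ 2‖ * ‖a ^ 2‖ := by
    rw [← norm_smul, ← h4, (ha.pow 2).norm_mul_self, sq]
  rw [← hsq]
  exact (mul_right_cancel₀ hne hcstar).symm

section vecMulVec

variable {n R : Type*} [Fintype n] [CommRing R]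

theorem vecMulVec_self_sub_vecMulVec_self_pow_three [DecidableEq n] {v w : n → R}
    (hv : v ⬝ᵥ v = 1) (hw : w ⬝ᵥ w = 1) :
    (vecMulVec v v - vecMulVec w w) ^ 3 =
      (1 - (v ⬝ᵥ w) ^ 2) • (vecMulVec v v - vecMulVec w w) := by
  simp only [pow_succ, pow_zero, one_mul, sub_mul, mul_sub, vecMulVec_mul_vecMulVec, hv, hw,
    dotProduct_comm w v, vecMulVec_smul, one_smul, smul_mul_assoc]
  module

theorem vecMulVec_self_sub_vecMulVec_self_mulVec {v : n → R} (w : n → R) (hv : v ⬝ᵥ v = 1) :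
    (vecMulVec v v - vecMulVec w w) *ᵥ v = v - (v ⬝ᵥ w) • w := by
  rw [sub_mulVec, vecMulVec_mulVec, vecMulVec_mulVec, hv, dotProduct_comm]
  simp

theorem dotProduct_self_sub_smul_of_dotProduct_self_eq_one {v w : n → R} (hv : v ⬝ᵥ v = 1)
    (hw : w ⬝ᵥ w = 1) :
    (v - (v ⬝ᵥ w) • w) ⬝ᵥ (v - (v ⬝ᵥ w) • w) = 1 - (v ⬝ᵥ w) ^ 2 := by
  simp only [sub_dotProduct, dotProduct_sub, smul_dotProduct, dotProduct_smul, hv, hw,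
    dotProduct_comm w v, smul_eq_mul]
  ring

omit [Fintype n] in
theorem isSelfAdjoint_vecMulVec_self_sub_vecMulVec_self [StarRing R] [TrivialStar R]
    (v w : n → R) : IsSelfAdjoint (vecMulVec v v - vecMulVec w w) := by
  simp [IsSelfAdjoint, star_eq_conjTranspose]

end vecMulVec

open scoped Matrix.Norms.L2Operator in
theorem stmt8 (v w : Fin 3 → ℝ) (hv : vecEnorm v = 1) (hw : vecEnorm w = 1) :
    opNorm (vecMulVec v v - vecMulVec w w) = Real.sqrt (1 - (v ⬝ᵥ w) ^ 2) := by
  rw [vecEnorm, Real.sqrt_eq_one] at hv hw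
  set A := vecMulVec v v - vecMulVec w w with hA
  have hAv : (A *ᵥ v) ⬝ᵥ (A *ᵥ v) = 1 - (v ⬝ᵥ w) ^ 2 := by
    rw [hA, vecMulVec_self_sub_vecMulVec_self_mulVec w hv,
      dotProduct_self_sub_smul_of_dotProduct_self_eq_one hv hw]
  have hnonneg : 0 ≤ 1 - (v ⬝ᵥ w) ^ 2 := hAv ▸ Finset.sum_nonneg fun i _ ↦ mul_self_nonneg _
  -- `opNorm` is definitionally the `ℓ²` operator norm on matrices
  change ‖A‖ = _
  rcases eq_or_ne A 0 with hA0 | hA0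
  · rw [hA0, zero_mulVec, dotProduct_zero] at hAv
    rw [hA0, norm_zero, ← hAv, Real.sqrt_zero]
  · have hnorm := (isSelfAdjoint_vecMulVec_self_sub_vecMulVec_self v w)
      |>.norm_sq_eq_of_pow_three_eq_smul (vecMulVec_self_sub_vecMulVec_self_pow_three hv hw) hA0
    rw [Real.norm_of_nonneg hnonneg] at hnorm
    rw [← hnorm, Real.sqrt_sq (norm_nonneg A)]
end

section
/- Let R ∈ SO(3) with trace(R) > −1 and let v ∈ ℝ³ be a unit vector. Then |Rv − v|² = 2·(1 − vᵀR²v)/(trace(R) + 1). -/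
open Matrix

/-- Euclidean norm of a vector in `ℝ³`. -/
noncomputable def enorm3 (v : Fin 3 → ℝ) : ℝ := Real.sqrt (v ⬝ᵥ v)

/-!
Cayley–Hamilton in dimension three, written through the adjugate, reads
`adj A = A² - (tr A) A + (tr adj A) I`. For a rotation `adj R = Rᵀ`, so this becomes
`R² = Rᵀ + t R - t I` with `t = tr R`. Pairing with `v` and writing `a = v ⬝ Rv`, `|v|² = 1`,
gives `v ⬝ R²v = (t + 1) a - t`, while `|Rv - v|² = 2 - 2a`; dividing by `t + 1 ≠ 0` concludes.
-/

theorem sq_enorm3 (x : Fin 3 → ℝ) : enorm3 x ^ 2 = x ⬝ᵥ x :=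
  Real.sq_sqrt (Finset.sum_nonneg fun i _ => mul_self_nonneg (x i))

namespace Matrix

variable {α : Type*} [CommRing α]

theorem adjugate_fin_three_eq_mul_self_sub (A : Matrix (Fin 3) (Fin 3) α) :
    adjugate A = A * A - trace A • A + trace (adjugate A) • 1 := by
  ext i j
  fin_cases i <;> fin_cases j <;>
    simp [adjugate_fin_three, mul_apply, trace, Fin.sum_univ_three] <;> ring

theorem adjugate_eq_transpose_of_orthogonal {n : Type*} [Fintype n] [DecidableEq n]
    {R : Matrix n n α} (hR : Rᵀ * R = 1) (hdet : R.det = 1) : adjugate R = Rᵀ := by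
  calc adjugate R = Rᵀ * R * adjugate R := by rw [hR, one_mul]
    _ = Rᵀ := by rw [mul_assoc, mul_adjugate, hdet, one_smul, mul_one]

theorem mul_self_eq_of_specialOrthogonal_fin_three {R : Matrix (Fin 3) (Fin 3) α}
    (hR : Rᵀ * R = 1) (hdet : R.det = 1) :
    R * R = Rᵀ + trace R • R - trace R • 1 := by
  have h := adjugate_fin_three_eq_mul_self_sub R
  rw [adjugate_eq_transpose_of_orthogonal hR hdet, trace_transpose] at h
  rw [h]
  abel

theorem dotProduct_mul_self_mulVec_of_specialOrthogonal_fin_three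
    {R : Matrix (Fin 3) (Fin 3) α} (hR : Rᵀ * R = 1) (hdet : R.det = 1) (v : Fin 3 → α) :
    v ⬝ᵥ (R * R) *ᵥ v = (trace R + 1) * (v ⬝ᵥ R *ᵥ v) - trace R * (v ⬝ᵥ v) := by
  rw [mul_self_eq_of_specialOrthogonal_fin_three hR hdet]
  simp only [add_mulVec, sub_mulVec, smul_mulVec, one_mulVec, dotProduct_add, dotProduct_sub,
    dotProduct_smul, smul_eq_mul, dotProduct_transpose_mulVec]
  ring

theorem dotProduct_mulVec_sub_self_of_orthogonal {n : Type*} [Fintype n] [DecidableEq n]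
    {R : Matrix n n α} (hR : Rᵀ * R = 1) (v : n → α) :
    (R *ᵥ v - v) ⬝ᵥ (R *ᵥ v - v) = 2 * (v ⬝ᵥ v) - 2 * (v ⬝ᵥ R *ᵥ v) := by
  have hnorm : (R *ᵥ v) ⬝ᵥ (R *ᵥ v) = v ⬝ᵥ v := by
    rw [dotProduct_mulVec, ← mulVec_transpose, mulVec_mulVec, hR, one_mulVec]
  simp only [sub_dotProduct, dotProduct_sub, hnorm, dotProduct_comm (R *ᵥ v) v]
  ring

end Matrix

theorem stmt11 (R : Matrix (Fin 3) (Fin 3) ℝ) (hR : Rᵀ * R = 1) (hdet : R.det = 1)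
    (htr : Matrix.trace R > -1)
    (v : Fin 3 → ℝ) (hv : enorm3 v = 1) :
    enorm3 (R *ᵥ v - v) ^ 2 = 2 * (1 - v ⬝ᵥ ((R * R) *ᵥ v)) / (Matrix.trace R + 1) := by
  have hvv : v ⬝ᵥ v = 1 := by rw [← sq_enorm3, hv, one_pow]
  have ht : trace R + 1 ≠ 0 := by linarith
  rw [sq_enorm3, dotProduct_mulVec_sub_self_of_orthogonal hR,
    dotProduct_mul_self_mulVec_of_specialOrthogonal_fin_three hR hdet, hvv]
  field_simp
  ring
end

section
/- Let b₁, b₂ ∈ ℝ³ be linearly independent, set b̄ := (b₁ × b₂)/|b₁ × b₂| and S := b₁b₁ᵀ + b₂b₂ᵀ, and let X be a real 3×3 matrix satisfying the four Moore–Penrose conditions for S. Let a ∈ ℝ³ be nonzero with â := a/|a|, let R, R̂ be real 3×3 orthogonal matrices (RᵀR = R̂ᵀR̂ = I), and set R̃ := R̂·Rᵀ. Then Σᵢ₌₁² (X·bᵢ) × (R̂·ââᵀ·R̂ᵀ·(I − R̃)·bᵢ) = ((I − b̄b̄ᵀ)·(R̂â − Râ)) × (R̂â). -/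
/-!
The factor `R̂ââᵀR̂ᵀ(I − R̂Rᵀ)` is the rank-one matrix `(R̂â)(R̂â − Râ)ᵀ`, because `R̂ᵀR̂ = I`.
Each summand is therefore `((R̂â − Râ)·bᵢ) (X bᵢ) × R̂â`, and the sum is `(X S (R̂â − Râ)) × R̂â`.
By the Penrose conditions `X S S = S`, so `X S` fixes the range of `S`, which contains `b₁` and
`b₂`, and `X S` kills `b̄` since `S b̄ = 0`. As `b₁, b₂, b̄` form a basis, `X S = I − b̄b̄ᵀ`.
-/

open Matrix

section CrossProduct

variable {α : Type*} [CommRing α]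

theorem smul_cross (k : α) (u v : Fin 3 → α) : (k • u) ⨯₃ v = k • (u ⨯₃ v) :=
  LinearMap.map_smul₂ _ _ _ _

theorem cross_smul (k : α) (u v : Fin 3 → α) : u ⨯₃ (k • v) = k • (u ⨯₃ v) :=
  map_smul _ _ _

theorem add_cross (u v w : Fin 3 → α) : (u + v) ⨯₃ w = u ⨯₃ w + v ⨯₃ w :=
  LinearMap.map_add₂ _ _ _ _

end CrossProduct

theorem Matrix.eq_of_mulVec_rows_eq {n K : Type*} [Fintype n] [DecidableEq n] [Field K]
    {A B M : Matrix n n K} (hM : M.det ≠ 0) (h : ∀ i, A *ᵥ M i = B *ᵥ M i) : A = B := by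
  have hspan := (linearIndependent_rows_of_det_ne_zero hM).span_eq_top_of_card_eq_finrank'
    (by simp)
  exact toLin'.injective (LinearMap.ext_on_range hspan fun i => by simpa using h i)

theorem Matrix.mul_mul_self_of_penrose {n α : Type*} [Fintype n] [CommRing α]
    {S X : Matrix n n α} (hS : Sᵀ = S) (h1 : S * X * S = S) (h4 : (X * S)ᵀ = X * S) :
    X * S * S = S :=
  calc X * S * S = (X * S)ᵀ * S := by rw [h4]
    _ = (S * X * S)ᵀ := by simp only [transpose_mul, hS, Matrix.mul_assoc]
    _ = S := by rw [h1, hS]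

theorem vecMulVec_add_vecMulVec_mulVec {n α : Type*} [Fintype n] [CommRing α]
    (u v w : n → α) :
    (vecMulVec u u + vecMulVec v v) *ᵥ w = (u ⬝ᵥ w) • u + (v ⬝ᵥ w) • v := by
  simp only [add_mulVec, vecMulVec_mulVec, op_smul_eq_smul]

/-- The coefficients `(v ⬝ᵥ v, -(u ⬝ᵥ v))` are the first column of the adjugate of the Gram
matrix of `u, v`, whose determinant is `|u × v|²`. -/
theorem vecMulVec_add_vecMulVec_mulVec_gram {α : Type*} [CommRing α] (u v : Fin 3 → α) :
    (vecMulVec u u + vecMulVec v v) *ᵥ ((v ⬝ᵥ v) • u - (u ⬝ᵥ v) • v)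
      = ((u ⨯₃ v) ⬝ᵥ (u ⨯₃ v)) • u := by
  rw [vecMulVec_add_vecMulVec_mulVec, cross_dot_cross]
  simp only [dotProduct_sub, dotProduct_smul, smul_eq_mul, dotProduct_comm v u]
  module

theorem innovation_mulVec {n α : Type*} [Fintype n] [DecidableEq n] [CommRing α]
    (R Rhat : Matrix n n α) (hRhat : Rhatᵀ * Rhat = 1) (a w : n → α) :
    (Rhat * vecMulVec a a * Rhatᵀ * (1 - Rhat * Rᵀ)) *ᵥ w
      = ((Rhat *ᵥ a - R *ᵥ a) ⬝ᵥ w) • (Rhat *ᵥ a) := by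
  have hrow : (Rhat *ᵥ a) ᵥ* Rhat = a := by
    rw [← vecMul_transpose, vecMul_vecMul, hRhat, vecMul_one]
  rw [mul_vecMulVec, vecMulVec_mul, vecMulVec_mul, vecMulVec_mulVec, op_smul_eq_smul,
    vecMul_transpose, vecMul_sub, vecMul_one, ← vecMul_vecMul, hrow, vecMul_transpose,
    dotProduct_comm]

theorem enorm3_inv_smul_dotProduct_self {v : Fin 3 → ℝ} (hv : v ≠ 0) :
    ((enorm3 v)⁻¹ • v) ⬝ᵥ ((enorm3 v)⁻¹ • v) = 1 := by
  have hpos : 0 < v ⬝ᵥ v :=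
    (dotProduct_star_self_nonneg v).lt_of_ne' (dotProduct_self_eq_zero.not.mpr hv)
  rw [smul_dotProduct, dotProduct_smul, smul_eq_mul, smul_eq_mul, ← mul_assoc, ← mul_inv, enorm3,
    Real.mul_self_sqrt hpos.le, inv_mul_cancel₀ hpos.ne']

theorem eq_one_sub_vecMulVec_of_mulVec {u v n : Fin 3 → ℝ} {A : Matrix (Fin 3) (Fin 3) ℝ}
    (hn : n ⬝ᵥ n = 1) (hun : u ⬝ᵥ n = 0) (hvn : v ⬝ᵥ n = 0) (hdet : n ⬝ᵥ (u ⨯₃ v) ≠ 0)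
    (hu : A *ᵥ u = u) (hv : A *ᵥ v = v) (hAn : A *ᵥ n = 0) : A = 1 - vecMulVec n n := by
  refine eq_of_mulVec_rows_eq (M := ![u, v, n]) ?_ fun i => ?_
  · rwa [← triple_product_eq_det, triple_product_permutation, triple_product_permutation]
  · fin_cases i <;>
      simp [sub_mulVec, vecMulVec_mulVec, dotProduct_comm n, hu, hv, hAn, hun, hvn, hn]

theorem mulVec_eq_self_of_mul_eq {u v : Fin 3 → ℝ} {P S : Matrix (Fin 3) (Fin 3) ℝ}
    (hS : S = vecMulVec u u + vecMulVec v v) (huv : u ⨯₃ v ≠ 0) (hP : P * S = S) :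
    P *ᵥ u = u := by
  have hgram := vecMulVec_add_vecMulVec_mulVec_gram u v
  rw [← hS] at hgram
  have hfix := congrArg (· *ᵥ ((v ⬝ᵥ v) • u - (u ⬝ᵥ v) • v)) hP
  rw [← mulVec_mulVec, hgram, mulVec_smul] at hfix
  exact smul_right_injective _ (dotProduct_self_eq_zero.not.mpr huv) hfix

theorem mul_eq_one_sub_vecMulVec_of_penrose {b₁ b₂ n : Fin 3 → ℝ} (hc : b₁ ⨯₃ b₂ ≠ 0)
    (hn : n = (enorm3 (b₁ ⨯₃ b₂))⁻¹ • (b₁ ⨯₃ b₂)) {S X : Matrix (Fin 3) (Fin 3) ℝ}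
    (hS : S = vecMulVec b₁ b₁ + vecMulVec b₂ b₂) (h1 : S * X * S = S)
    (h4 : (X * S)ᵀ = X * S) :
    X * S = 1 - vecMulVec n n := by
  have hXS : X * S * S = S := mul_mul_self_of_penrose (by simp [hS]) h1 h4
  have hnn : n ⬝ᵥ n = 1 := hn ▸ enorm3_inv_smul_dotProduct_self hc
  have h1n : b₁ ⬝ᵥ n = 0 := by rw [hn, dotProduct_smul, dot_self_cross, smul_zero]
  have h2n : b₂ ⬝ᵥ n = 0 := by rw [hn, dotProduct_smul, dot_cross_self, smul_zero]
  have hdet : n ⬝ᵥ (b₁ ⨯₃ b₂) ≠ 0 := by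
    have hk : (enorm3 (b₁ ⨯₃ b₂))⁻¹ ≠ 0 := fun h => by simp [hn, h] at hnn
    rw [hn, smul_dotProduct, smul_eq_mul]
    exact mul_ne_zero hk (dotProduct_self_eq_zero.not.mpr hc)
  refine eq_one_sub_vecMulVec_of_mulVec hnn h1n h2n hdet (mulVec_eq_self_of_mul_eq hS hc hXS)
    (mulVec_eq_self_of_mul_eq (hS.trans (add_comm _ _)) ?_ hXS) ?_
  · rwa [← cross_anticomm, neg_ne_zero]
  · rw [← mulVec_mulVec, hS, vecMulVec_add_vecMulVec_mulVec, h1n, h2n]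
    simp

theorem stmt13_general (b₁ b₂ : Fin 3 → ℝ) (hli : LinearIndependent ℝ ![b₁, b₂])
    (bbar : Fin 3 → ℝ) (hbar : bbar = (enorm3 (b₁ ⨯₃ b₂))⁻¹ • (b₁ ⨯₃ b₂))
    (S X : Matrix (Fin 3) (Fin 3) ℝ)
    (hS : S = vecMulVec b₁ b₁ + vecMulVec b₂ b₂)
    (h1 : S * X * S = S)
    (h4 : (X * S)ᵀ = X * S)
    (ahat : Fin 3 → ℝ)
    (R Rhat : Matrix (Fin 3) (Fin 3) ℝ) (hRh : Rhatᵀ * Rhat = 1)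
    (Rt : Matrix (Fin 3) (Fin 3) ℝ) (hRt : Rt = Rhat * Rᵀ) :
    (X *ᵥ b₁) ⨯₃ ((Rhat * vecMulVec ahat ahat * Rhatᵀ * (1 - Rt)) *ᵥ b₁)
      + (X *ᵥ b₂) ⨯₃ ((Rhat * vecMulVec ahat ahat * Rhatᵀ * (1 - Rt)) *ᵥ b₂)
      = (((1 : Matrix (Fin 3) (Fin 3) ℝ) - vecMulVec bbar bbar) *ᵥ (Rhat *ᵥ ahat - R *ᵥ ahat))
          ⨯₃ (Rhat *ᵥ ahat) := by
  have hXS := mul_eq_one_sub_vecMulVec_of_penrose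
    (crossProduct_ne_zero_iff_linearIndependent.mpr hli) hbar hS h1 h4
  set d := Rhat *ᵥ ahat - R *ᵥ ahat
  calc _ = ((d ⬝ᵥ b₁) • (X *ᵥ b₁) + (d ⬝ᵥ b₂) • (X *ᵥ b₂)) ⨯₃ (Rhat *ᵥ ahat) := by
        rw [hRt, innovation_mulVec R Rhat hRh, innovation_mulVec R Rhat hRh, cross_smul,
          cross_smul, add_cross, smul_cross, smul_cross]
    _ = ((X * S) *ᵥ d) ⨯₃ (Rhat *ᵥ ahat) := by
        rw [← mulVec_mulVec, hS, vecMulVec_add_vecMulVec_mulVec, mulVec_add, mulVec_smul,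
          mulVec_smul, dotProduct_comm b₁, dotProduct_comm b₂]
    _ = _ := by rw [hXS]

theorem stmt13 (b₁ b₂ : Fin 3 → ℝ) (hli : LinearIndependent ℝ ![b₁, b₂])
    (bbar : Fin 3 → ℝ) (hbar : bbar = (enorm3 (b₁ ⨯₃ b₂))⁻¹ • (b₁ ⨯₃ b₂))
    (S X : Matrix (Fin 3) (Fin 3) ℝ)
    (hS : S = vecMulVec b₁ b₁ + vecMulVec b₂ b₂)
    (h1 : S * X * S = S) (h2 : X * S * X = X)
    (h3 : (S * X)ᵀ = S * X) (h4 : (X * S)ᵀ = X * S)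
    (a : Fin 3 → ℝ) (ha : a ≠ 0)
    (ahat : Fin 3 → ℝ) (hahat : ahat = (enorm3 a)⁻¹ • a)
    (R Rhat : Matrix (Fin 3) (Fin 3) ℝ) (hR : Rᵀ * R = 1) (hRh : Rhatᵀ * Rhat = 1)
    (Rt : Matrix (Fin 3) (Fin 3) ℝ) (hRt : Rt = Rhat * Rᵀ) :
    (X *ᵥ b₁) ⨯₃ ((Rhat * vecMulVec ahat ahat * Rhatᵀ * (1 - Rt)) *ᵥ b₁)
      + (X *ᵥ b₂) ⨯₃ ((Rhat * vecMulVec ahat ahat * Rhatᵀ * (1 - Rt)) *ᵥ b₂)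
      = (((1 : Matrix (Fin 3) (Fin 3) ℝ) - vecMulVec bbar bbar) *ᵥ (Rhat *ᵥ ahat - R *ᵥ ahat))
          ⨯₃ (Rhat *ᵥ ahat) :=
  stmt13_general b₁ b₂ hli bbar hbar S X hS h1 h4 ahat R Rhat hRh Rt hRt
end

section
/- Let R, R̂ be real 3×3 orthogonal matrices (RᵀR = R̂ᵀR̂ = I), set R̃ := R̂·Rᵀ, let Π be a symmetric real 3×3 matrix, and let â ∈ ℝ³. Then trace([ (Π·(R̂â − Râ)) × (R̂â) ]× · R̃) = (R̂â − Râ)ᵀ·Π·(R̃²·Râ − Râ). -/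
/-!
Since `[v × w]ₓ = w vᵀ - v wᵀ`, we get `trace ([v × w]ₓ M) = vᵀ (M - Mᵀ) w`. With
`v = Π (R̂â - Râ)`, `w = R̂â` and `M = R̃`, orthogonality gives `R̃ (Râ) = R̂â` and
`R̃ᵀ (R̂â) = Râ`, so `M w = R̃² (Râ)` and `Mᵀ w = Râ`; the symmetry of `Π` moves it to the
other side of the dot product.
-/

open Matrix

/-- The matrix form of the BAC–CAB rule `(v × w) × y = w (v ⬝ y) - v (w ⬝ y)`. -/
theorem skew_cross (v w : Fin 3 → ℝ) : skew (v ⨯₃ w) = vecMulVec w v - vecMulVec v w := by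
  ext i j
  fin_cases i <;> fin_cases j <;> simp [skew, cross_apply, vecMulVec] <;> ring

theorem trace_skew_cross_mul (v w : Fin 3 → ℝ) (M : Matrix (Fin 3) (Fin 3) ℝ) :
    trace (skew (v ⨯₃ w) * M) = v ⬝ᵥ (M *ᵥ w - Mᵀ *ᵥ w) := by
  rw [skew_cross, Matrix.sub_mul, trace_sub, vecMulVec_mul, vecMulVec_mul, trace_vecMulVec,
    trace_vecMulVec, dotProduct_comm w, ← dotProduct_mulVec, mulVec_transpose, dotProduct_sub]

theorem mulVec_dotProduct_of_transpose_eq {n : Type*} [Fintype n] {A : Matrix n n ℝ}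
    (hA : Aᵀ = A) (v w : n → ℝ) : (A *ᵥ v) ⬝ᵥ w = v ⬝ᵥ (A *ᵥ w) := by
  conv_lhs => rw [← hA, mulVec_transpose]
  rw [dotProduct_mulVec]

theorem stmt14 (R Rhat : Matrix (Fin 3) (Fin 3) ℝ)
    (hR : Rᵀ * R = 1) (hRh : Rhatᵀ * Rhat = 1)
    (Rt : Matrix (Fin 3) (Fin 3) ℝ) (hRt : Rt = Rhat * Rᵀ)
    (Pr : Matrix (Fin 3) (Fin 3) ℝ) (hPr : Prᵀ = Pr)
    (ahat : Fin 3 → ℝ) :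
    Matrix.trace (skew ((Pr *ᵥ (Rhat *ᵥ ahat - R *ᵥ ahat)) ⨯₃ (Rhat *ᵥ ahat)) * Rt)
      = (Rhat *ᵥ ahat - R *ᵥ ahat) ⬝ᵥ (Pr *ᵥ ((Rt * Rt) *ᵥ (R *ᵥ ahat) - R *ᵥ ahat)) := by
  set a := Rhat *ᵥ ahat
  set b := R *ᵥ ahat
  have hRt_b : Rt *ᵥ b = a := by
    rw [hRt, mulVec_mulVec, Matrix.mul_assoc, hR, Matrix.mul_one]
  have hRtT_a : Rtᵀ *ᵥ a = b := by
    rw [hRt, transpose_mul, transpose_transpose, mulVec_mulVec, Matrix.mul_assoc, hRh,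
      Matrix.mul_one]
  calc trace (skew ((Pr *ᵥ (a - b)) ⨯₃ a) * Rt)
      = (Pr *ᵥ (a - b)) ⬝ᵥ (Rt *ᵥ a - Rtᵀ *ᵥ a) := trace_skew_cross_mul _ _ _
    _ = (a - b) ⬝ᵥ (Pr *ᵥ ((Rt * Rt) *ᵥ b - b)) := by
      rw [← mulVec_mulVec, hRt_b, hRtT_a, mulVec_dotProduct_of_transpose_eq hPr]
end

section
/- Let θ* ∈ (0, π/2) and ε ∈ [0, cos(θ*/2)·cos(θ*)). Let R̃ ∈ SO(3) satisfy trace(R̃) ≥ 1 + 2cos(θ*), and let v, w ∈ ℝ³ be unit vectors such that the operator norm of vvᵀ − wwᵀ (with respect to the Euclidean norm) is at most ε. Then (R̃ᵀv − v)ᵀ·(I − wwᵀ)·((R̃ᵀ)²v − v) ≥ (1 − vᵀR̃²v)·(cos(θ*) − ε/cos(θ*/2)); in particular this quantity is nonnegative. -/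
/-!
Write `c = vᵀRv`, `t = tr R`, `a = Rᵀv - v` and `b = (Rᵀ)²v - v`. Replacing `I - wwᵀ` by
`I - vvᵀ` leaves the main term `aᵀ(I - vvᵀ)b = c (1 - vᵀR²v)` and an error `aᵀ(vvᵀ - wwᵀ)b` of
size at most `ε |a| |b|`. Cayley–Hamilton for a rotation, `R² = Rᵀ + tR - tI`, gives
`1 - vᵀR²v = (t + 1)(1 - c)`, hence `|a| |b| = 2 (1 - c) √(t + 1) ≤ (1 - vᵀR²v) / cos(θ*/2)`
because `t + 1 ≥ 4 cos²(θ*/2)`. Finally `c ≥ (t - 1)/2 ≥ cos θ*`, as `R + Rᵀ - (t - 1)I` is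
positive semidefinite.
-/

open Matrix Real

/-- Euclidean norm of a vector in `ℝ³`. -/
noncomputable def enorm' (v : Fin 3 → ℝ) : ℝ := Real.sqrt (v ⬝ᵥ v)

section DotProduct

variable {m n α : Type*} [Fintype m] [Fintype n] [CommRing α]

lemma dotProduct_self_nonneg (x : n → ℝ) : 0 ≤ x ⬝ᵥ x :=
  Finset.sum_nonneg fun i _ => mul_self_nonneg (x i)

lemma transpose_mulVec_dotProduct (A : Matrix m n α) (x : m → α) (y : n → α) :
    (Aᵀ *ᵥ x) ⬝ᵥ y = x ⬝ᵥ (A *ᵥ y) := by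
  rw [mulVec_transpose, dotProduct_mulVec]

lemma transpose_mulVec_dotProduct_transpose_mulVec [DecidableEq n] {Q : Matrix n n α}
    (hQ : Qᵀ * Q = 1) (x y : n → α) : (Qᵀ *ᵥ x) ⬝ᵥ (Qᵀ *ᵥ y) = x ⬝ᵥ y := by
  rw [transpose_mulVec_dotProduct, mulVec_mulVec, mul_eq_one_comm.mp hQ, one_mulVec]

lemma transpose_mulVec_sub_dotProduct_self [DecidableEq n] {Q : Matrix n n α}
    (hQ : Qᵀ * Q = 1) {v : n → α} (hv : v ⬝ᵥ v = 1) :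
    (Qᵀ *ᵥ v - v) ⬝ᵥ (Qᵀ *ᵥ v - v) = 2 * (1 - v ⬝ᵥ (Q *ᵥ v)) := by
  simp only [sub_dotProduct, dotProduct_sub, transpose_mulVec_dotProduct_transpose_mulVec hQ,
    transpose_mulVec_dotProduct, dotProduct_comm v (Qᵀ *ᵥ v), hv]
  ring

lemma sub_dotProduct_one_sub_vecMulVec_mulVec_sub [DecidableEq n] {v : n → α}
    (hv : v ⬝ᵥ v = 1) (x y : n → α) :
    (x - v) ⬝ᵥ ((1 - vecMulVec v v) *ᵥ (y - v)) = x ⬝ᵥ y - (x ⬝ᵥ v) * (y ⬝ᵥ v) := by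
  simp only [sub_mulVec, one_mulVec, vecMulVec_mulVec, op_smul_eq_smul, dotProduct_sub,
    sub_dotProduct, dotProduct_smul, smul_eq_mul, dotProduct_comm v y, hv]
  ring

lemma transpose_mulVec_sub_dotProduct_one_sub_vecMulVec_mulVec [DecidableEq n] {Q : Matrix n n α}
    (hQ : Qᵀ * Q = 1) {v : n → α} (hv : v ⬝ᵥ v = 1) :
    (Qᵀ *ᵥ v - v) ⬝ᵥ ((1 - vecMulVec v v) *ᵥ ((Qᵀ * Qᵀ) *ᵥ v - v)) =
      (1 - v ⬝ᵥ ((Q * Q) *ᵥ v)) * (v ⬝ᵥ (Q *ᵥ v)) := by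
  have h1 : (Qᵀ *ᵥ v) ⬝ᵥ v = v ⬝ᵥ (Q *ᵥ v) := transpose_mulVec_dotProduct Q v v
  have h2 : ((Qᵀ * Qᵀ) *ᵥ v) ⬝ᵥ v = v ⬝ᵥ ((Q * Q) *ᵥ v) := by
    rw [← transpose_mul, transpose_mulVec_dotProduct]
  have h3 : (Qᵀ *ᵥ v) ⬝ᵥ ((Qᵀ * Qᵀ) *ᵥ v) = v ⬝ᵥ (Q *ᵥ v) := by
    rw [← mulVec_mulVec, transpose_mulVec_dotProduct_transpose_mulVec hQ,
      dotProduct_transpose_mulVec]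
  rw [sub_dotProduct_one_sub_vecMulVec_mulVec_sub hv, h1, h2, h3]
  ring

lemma dotProduct_mulVec_nonneg_of_mul_self_eq_smul {M : Matrix n n ℝ} {μ : ℝ} (hMT : Mᵀ = M)
    (hM : M * M = μ • M) (hμ : 0 ≤ μ) (x : n → ℝ) : 0 ≤ x ⬝ᵥ (M *ᵥ x) := by
  have hsq : (M *ᵥ x) ⬝ᵥ (M *ᵥ x) = μ * (x ⬝ᵥ (M *ᵥ x)) := by
    rw [← transpose_mulVec_dotProduct, hMT, mulVec_mulVec, hM, smul_mulVec, smul_dotProduct,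
      smul_eq_mul, dotProduct_comm]
  rcases hμ.lt_or_eq with hμ | rfl
  · exact nonneg_of_mul_nonneg_right (hsq ▸ dotProduct_self_nonneg _) hμ
  · rw [zero_mul, dotProduct_self_eq_zero] at hsq
    rw [hsq, dotProduct_zero]

end DotProduct

lemma enorm'_eq_norm_toLp (x : Fin 3 → ℝ) : enorm' x = ‖WithLp.toLp 2 x‖ := by
  simp [enorm', EuclideanSpace.norm_eq, dotProduct, sq]

lemma abs_dotProduct_mulVec_le_opNorm (A : Matrix (Fin 3) (Fin 3) ℝ) (x y : Fin 3 → ℝ) :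
    |x ⬝ᵥ (A *ᵥ y)| ≤ opNorm A * (enorm' x * enorm' y) := by
  set L := (toEuclideanLin A).toContinuousLinearMap
  have h : x ⬝ᵥ (A *ᵥ y) = inner ℝ (WithLp.toLp 2 x) (L (WithLp.toLp 2 y)) := by
    rw [dotProduct_comm]
    rfl
  rw [h, enorm'_eq_norm_toLp, enorm'_eq_norm_toLp]
  calc _ ≤ ‖WithLp.toLp 2 x‖ * ‖L (WithLp.toLp 2 y)‖ := abs_real_inner_le_norm _ _
    _ ≤ ‖WithLp.toLp 2 x‖ * (‖L‖ * ‖WithLp.toLp 2 y‖) := by gcongr; exact L.le_opNorm _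
    _ = _ := by rw [opNorm]; ring

section SpecialOrthogonal

variable {α : Type*} [CommRing α]

lemma adjugate_fin_three_eq (A : Matrix (Fin 3) (Fin 3) α) :
    adjugate A = A * A - trace A • A + trace (adjugate A) • 1 := by
  ext i j
  fin_cases i <;> fin_cases j <;>
    simp [adjugate_fin_three, mul_apply, trace_fin_three, Fin.sum_univ_three, one_apply] <;> ring

lemma adjugate_eq_transpose_of_det_eq_one {n : Type*} [Fintype n] [DecidableEq n]
    {R : Matrix n n α} (hR : Rᵀ * R = 1) (hdet : R.det = 1) : adjugate R = Rᵀ := by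
  rw [← one_mul (adjugate R), ← hR, mul_assoc, mul_adjugate, hdet, one_smul, mul_one]

/-- Cayley–Hamilton: a special orthogonal `3 × 3` matrix has characteristic polynomial
`X³ - t X² + t X - 1`, where `t = trace R`. -/
lemma mul_self_eq_of_det_eq_one {R : Matrix (Fin 3) (Fin 3) α} (hR : Rᵀ * R = 1)
    (hdet : R.det = 1) : R * R = Rᵀ + trace R • R - trace R • 1 := by
  have h := adjugate_fin_three_eq R
  rw [adjugate_eq_transpose_of_det_eq_one hR hdet, trace_transpose] at h
  rw [h]
  abel

lemma trace_le_card_of_transpose_mul_self_eq_one {n : Type*} [Fintype n] [DecidableEq n]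
    {R : Matrix n n ℝ} (hR : Rᵀ * R = 1) : trace R ≤ Fintype.card n := by
  have hU : R ∈ unitaryGroup n ℝ := mem_unitaryGroup_iff'.mpr hR
  calc trace R = ∑ i, R i i := rfl
    _ ≤ ∑ _i : n, (1 : ℝ) := Finset.sum_le_sum fun i _ =>
        (le_abs_self _).trans (entry_norm_bound_of_unitary hU i i)
    _ = Fintype.card n := by simp

variable {R : Matrix (Fin 3) (Fin 3) ℝ} {v : Fin 3 → ℝ}

/-- `R + Rᵀ - (trace R - 1) • 1` is `3 - trace R` times the projection onto the rotation axis,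
hence positive semidefinite. -/
lemma trace_sub_one_le_two_mul_dotProduct_mulVec (hR : Rᵀ * R = 1) (hdet : R.det = 1)
    (hv : v ⬝ᵥ v = 1) : trace R - 1 ≤ 2 * (v ⬝ᵥ (R *ᵥ v)) := by
  set t := trace R
  set M := R + Rᵀ - (t - 1) • (1 : Matrix (Fin 3) (Fin 3) ℝ)
  have hMT : Mᵀ = M := by
    simp only [M, transpose_sub, transpose_add, transpose_transpose, transpose_smul,
      transpose_one, add_comm]
  have hsq : R * R = Rᵀ + t • R - t • 1 := mul_self_eq_of_det_eq_one hR hdet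
  have hsqT : Rᵀ * Rᵀ = R + t • Rᵀ - t • 1 := by
    simpa only [transpose_mul, transpose_add, transpose_sub, transpose_smul, transpose_one,
      transpose_transpose, trace_transpose] using congrArg transpose hsq
  have hM : M * M = (3 - t) • M := by
    simp only [M, sub_mul, mul_sub, add_mul, mul_add, smul_mul_assoc, Matrix.mul_smul, one_mul,
      mul_one, smul_smul, hR, mul_eq_one_comm.mp hR, hsq, hsqT, smul_add, smul_sub]
    module
  have h3 : t ≤ 3 := by simpa using trace_le_card_of_transpose_mul_self_eq_one hR
  have hq := dotProduct_mulVec_nonneg_of_mul_self_eq_smul hMT hM (by linarith) v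
  simp only [M, sub_mulVec, add_mulVec, smul_mulVec, one_mulVec, dotProduct_sub, dotProduct_add,
    dotProduct_smul, smul_eq_mul, dotProduct_transpose_mulVec, hv] at hq
  linarith

lemma dotProduct_mulVec_le_one (hR : Rᵀ * R = 1) (hv : v ⬝ᵥ v = 1) : v ⬝ᵥ (R *ᵥ v) ≤ 1 := by
  linarith [transpose_mulVec_sub_dotProduct_self hR hv, dotProduct_self_nonneg (Rᵀ *ᵥ v - v)]

lemma one_sub_dotProduct_mul_self_mulVec (hR : Rᵀ * R = 1) (hdet : R.det = 1)
    (hv : v ⬝ᵥ v = 1) :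
    1 - v ⬝ᵥ ((R * R) *ᵥ v) = (trace R + 1) * (1 - v ⬝ᵥ (R *ᵥ v)) := by
  simp only [mul_self_eq_of_det_eq_one hR hdet, sub_mulVec, add_mulVec, smul_mulVec, one_mulVec,
    dotProduct_sub, dotProduct_add, dotProduct_smul, smul_eq_mul, dotProduct_transpose_mulVec, hv]
  ring

lemma enorm'_mul_enorm'_le (hR : Rᵀ * R = 1) (hdet : R.det = 1) (hv : v ⬝ᵥ v = 1) {h : ℝ}
    (hh : 0 < h) (hth : 4 * h ^ 2 ≤ trace R + 1) :
    enorm' (Rᵀ *ᵥ v - v) * enorm' ((Rᵀ * Rᵀ) *ᵥ v - v) ≤ (1 - v ⬝ᵥ ((R * R) *ᵥ v)) / h := by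
  have hRR : (R * R)ᵀ * (R * R) = 1 := by
    rw [transpose_mul, Matrix.mul_assoc, ← Matrix.mul_assoc Rᵀ R R, hR, Matrix.one_mul, hR]
  have ha := transpose_mulVec_sub_dotProduct_self hR hv
  have hb := transpose_mulVec_sub_dotProduct_self hRR hv
  rw [transpose_mul, one_sub_dotProduct_mul_self_mulVec hR hdet hv] at hb
  rw [enorm', enorm', ← Real.sqrt_mul (dotProduct_self_nonneg _), ha, hb,
    one_sub_dotProduct_mul_self_mulVec hR hdet hv, Real.sqrt_le_iff]
  have hs : 0 ≤ 1 - v ⬝ᵥ (R *ᵥ v) := sub_nonneg.mpr (dotProduct_mulVec_le_one hR hv)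
  set s := 1 - v ⬝ᵥ (R *ᵥ v)
  have ht : 0 ≤ trace R + 1 := le_trans (by positivity) hth
  refine ⟨div_nonneg (mul_nonneg ht hs) hh.le, ?_⟩
  rw [div_pow, le_div_iff₀ (by positivity)]
  nlinarith [mul_nonneg (mul_nonneg ht (sq_nonneg s)) (sub_nonneg.mpr hth)]

lemma le_dotProduct_one_sub_vecMulVec_mulVec (hR : Rᵀ * R = 1) (hdet : R.det = 1)
    (hv : v ⬝ᵥ v = 1) {w : Fin 3 → ℝ} {ε h : ℝ} (hε : 0 ≤ ε)
    (hvw : opNorm (vecMulVec v v - vecMulVec w w) ≤ ε) (hh : 0 < h)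
    (hth : 4 * h ^ 2 ≤ trace R + 1) :
    (1 - v ⬝ᵥ ((R * R) *ᵥ v)) * (v ⬝ᵥ (R *ᵥ v) - ε / h) ≤
      (Rᵀ *ᵥ v - v) ⬝ᵥ ((1 - vecMulVec w w) *ᵥ ((Rᵀ * Rᵀ) *ᵥ v - v)) := by
  have herr := (abs_dotProduct_mulVec_le_opNorm _ (Rᵀ *ᵥ v - v) ((Rᵀ * Rᵀ) *ᵥ v - v)).trans
    (mul_le_mul hvw (enorm'_mul_enorm'_le hR hdet hv hh hth)
      (mul_nonneg (Real.sqrt_nonneg _) (Real.sqrt_nonneg _)) hε)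
  rw [← sub_add_sub_cancel (1 : Matrix (Fin 3) (Fin 3) ℝ) (vecMulVec v v), add_mulVec,
    dotProduct_add, transpose_mulVec_sub_dotProduct_one_sub_vecMulVec_mulVec hR hv]
  rw [mul_div_left_comm] at herr
  linarith [(abs_le.mp herr).1]

end SpecialOrthogonal

theorem stmt18_general (θs ε : ℝ) (hθ : θs ∈ Set.Ioo 0 (π / 2))
    (hε : ε ∈ Set.Ico 0 (Real.cos (θs / 2) * Real.cos θs))
    (Rt : Matrix (Fin 3) (Fin 3) ℝ) (hRt : Rtᵀ * Rt = 1) (hdet : Rt.det = 1)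
    (htr : Matrix.trace Rt ≥ 1 + 2 * Real.cos θs)
    (v w : Fin 3 → ℝ) (hv : enorm' v = 1)
    (hvw : opNorm (vecMulVec v v - vecMulVec w w) ≤ ε) :
    (Rtᵀ *ᵥ v - v) ⬝ᵥ (((1 : Matrix (Fin 3) (Fin 3) ℝ) - vecMulVec w w) *ᵥ ((Rtᵀ * Rtᵀ) *ᵥ v - v))
        ≥ (1 - v ⬝ᵥ ((Rt * Rt) *ᵥ v)) * (Real.cos θs - ε / Real.cos (θs / 2))
      ∧ 0 ≤ (Rtᵀ *ᵥ v - v) ⬝ᵥ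
          (((1 : Matrix (Fin 3) (Fin 3) ℝ) - vecMulVec w w) *ᵥ ((Rtᵀ * Rtᵀ) *ᵥ v - v)) := by
  obtain ⟨hθ0, hθ2⟩ := hθ
  obtain ⟨hε0, hεlt⟩ := hε
  have hv1 : v ⬝ᵥ v = 1 := Real.sqrt_eq_one.mp hv
  have hch : 0 < cos (θs / 2) := cos_pos_of_mem_Ioo ⟨by linarith, by linarith⟩
  have hch_sq : 4 * cos (θs / 2) ^ 2 ≤ trace Rt + 1 := by
    rw [cos_sq, mul_div_cancel₀ _ two_ne_zero]
    linarith
  have hc : cos θs ≤ v ⬝ᵥ (Rt *ᵥ v) := by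
    linarith [trace_sub_one_le_two_mul_dotProduct_mulVec hRt hdet hv1]
  have hd : 0 ≤ 1 - v ⬝ᵥ ((Rt * Rt) *ᵥ v) := by
    rw [one_sub_dotProduct_mul_self_mulVec hRt hdet hv1]
    exact mul_nonneg (le_trans (by positivity) hch_sq)
      (sub_nonneg.mpr (dotProduct_mulVec_le_one hRt hv1))
  have hgap : 0 ≤ cos θs - ε / cos (θs / 2) := by
    rw [sub_nonneg, div_le_iff₀ hch]
    linarith
  have hmain := (mul_le_mul_of_nonneg_left (sub_le_sub_right hc _) hd).trans
    (le_dotProduct_one_sub_vecMulVec_mulVec hRt hdet hv1 hε0 hvw hch hch_sq)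
  exact ⟨hmain, (mul_nonneg hd hgap).trans hmain⟩

theorem stmt18 (θs ε : ℝ) (hθ : θs ∈ Set.Ioo 0 (π / 2))
    (hε : ε ∈ Set.Ico 0 (Real.cos (θs / 2) * Real.cos θs))
    (Rt : Matrix (Fin 3) (Fin 3) ℝ) (hRt : Rtᵀ * Rt = 1) (hdet : Rt.det = 1)
    (htr : Matrix.trace Rt ≥ 1 + 2 * Real.cos θs)
    (v w : Fin 3 → ℝ) (hv : enorm' v = 1) (hw : enorm' w = 1)
    (hvw : opNorm (vecMulVec v v - vecMulVec w w) ≤ ε) :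
    (Rtᵀ *ᵥ v - v) ⬝ᵥ (((1 : Matrix (Fin 3) (Fin 3) ℝ) - vecMulVec w w) *ᵥ ((Rtᵀ * Rtᵀ) *ᵥ v - v))
        ≥ (1 - v ⬝ᵥ ((Rt * Rt) *ᵥ v)) * (Real.cos θs - ε / Real.cos (θs / 2))
      ∧ 0 ≤ (Rtᵀ *ᵥ v - v) ⬝ᵥ
          (((1 : Matrix (Fin 3) (Fin 3) ℝ) - vecMulVec w w) *ᵥ ((Rtᵀ * Rtᵀ) *ᵥ v - v)) :=
  stmt18_general θs ε hθ hε Rt hRt hdet htr v w hv hvw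
end
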